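/- Let n ≥ 2, let f, g : I → ℝ be twice differentiable functions with nowhere vanishing first derivatives, and let p, q : I → ℝ_+^n be continuously differentiable. If A_{f,p} is locally smaller than A_{g,q}, then the function x ↦ q_0(x)²|g'(x)| / (p_0(x)²|f'(x)|) is increasing on I. -/

import Mathlib

/-!
Freeze every coordinate at `x` except the `i`-th one. Along that line both means become weighted
two-point quasi-arithmetic means `f⁻¹(f x + w(y) (f y - f x))`, with weights
`w = pᵢ(y) / (pᵢ(y) + ∑_{j ≠ i} p_j(x))`, which agree at `y = x`; so their difference has a local
minimum at `x`. Equal first derivatives give `pᵢ/p₀ = qᵢ/q₀ =: r` at `x`, and ordered second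
derivatives, divided by `1 - r > 0` (this is where `n ≥ 2` enters) and summed over `i`, give
`2 p₀'/p₀ + f''/f' ≤ 2 q₀'/q₀ + g''/g'`: the logarithmic derivative of `q₀²|g'|/(p₀²|f'|)` is
nonnegative.
-/

open Set Function Real

/-- The `n`-variable generalized Bajraktarević mean `A_{f,p}` on the interval `I`:
`A_{f,p}(x) = f⁻¹((∑ pᵢ(xᵢ) f(xᵢ)) / (∑ pᵢ(xᵢ)))`. -/
noncomputable def bajMean {n : ℕ} (I : Set ℝ) (f : ℝ → ℝ) (p : Fin n → ℝ → ℝ)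
    (x : Fin n → ℝ) : ℝ :=
  Function.invFunOn f I ((∑ i, p i (x i) * f (x i)) / (∑ i, p i (x i)))

/-- The `i`-th first-order partial derivative of `Φ : Iⁿ → ℝ`. -/
noncomputable def pder {n : ℕ} (Φ : (Fin n → ℝ) → ℝ) (i : Fin n) (y : Fin n → ℝ) : ℝ :=
  deriv (fun t => Φ (Function.update y i t)) (y i)

/-- The second-order partial derivative `∂ᵢ∂ⱼΦ`. -/
noncomputable def pder2 {n : ℕ} (Φ : (Fin n → ℝ) → ℝ) (i j : Fin n) :
    (Fin n → ℝ) → ℝ :=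
  pder (pder Φ j) i

/-- `M` is locally smaller than `N`: there is an open set `U ⊆ Iⁿ` containing the
diagonal of `Iⁿ` on which `M ≤ N`. -/
def LocallySmaller {n : ℕ} (I : Set ℝ) (M N : (Fin n → ℝ) → ℝ) : Prop :=
  ∃ U : Set (Fin n → ℝ), IsOpen U ∧ U ⊆ {x | ∀ i, x i ∈ I} ∧
    (∀ x ∈ I, (fun _ => x) ∈ U) ∧ ∀ x ∈ U, M x ≤ N x

open Filter Topology

theorem HasDerivAt.mul_of_eq_zero {u v : ℝ → ℝ} {x v' : ℝ} (hv : HasDerivAt v v' x)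
    (hv0 : v x = 0) (hu : ContinuousAt u x) :
    HasDerivAt (fun y => u y * v y) (u x * v') x := by
  rw [hasDerivAt_iff_tendsto_slope] at hv ⊢
  refine ((hu.tendsto.mono_left nhdsWithin_le_nhds).mul hv).congr' ?_
  filter_upwards with y
  simp [slope_def_field, hv0, mul_div_assoc]

theorem IsLocalMin.nonneg_of_hasDerivAt_deriv {D D' : ℝ → ℝ} {x c : ℝ} (hmin : IsLocalMin D x)
    (hD : ∀ᶠ y in 𝓝 x, HasDerivAt D (D' y) y) (hD' : HasDerivAt D' c x) : 0 ≤ c := by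
  have hderiv : deriv D =ᶠ[𝓝 x] D' := hD.mono fun y hy => hy.deriv
  have hD'x : deriv D x = 0 := by
    rw [hderiv.eq_of_nhds]; exact hmin.hasDerivAt_eq_zero hD.self_of_nhds
  have hc : deriv (deriv D) x = c := (hD'.congr_of_eventuallyEq hderiv).deriv
  by_contra! hneg
  -- then `x` is also a local maximum, so `D` is locally constant
  have hmax : IsLocalMax D x := isLocalMax_of_deriv_deriv_neg (hc ▸ hneg) hD'x
    hD.self_of_nhds.continuousAt
  have hconst : D =ᶠ[𝓝 x] fun _ => D x := by
    filter_upwards [hmin, hmax] with y h₁ h₂ using le_antisymm h₂ h₁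
  have : deriv (deriv D) x = 0 := by
    rw [(hconst.deriv.trans (Eventually.of_forall fun _ => deriv_const _ _)).deriv_eq]
    exact deriv_const _ _
  linarith

theorem HasDerivAt.abs_of_ne_zero {u : ℝ → ℝ} {u' x : ℝ} (hu : HasDerivAt u u' x) (h : u x ≠ 0) :
    HasDerivAt (fun y => |u y|) (|u x| / u x * u') x := by
  refine ((hasDerivAt_abs h).comp x hu).congr_deriv ?_
  rcases h.lt_or_gt with h' | h'
  · rw [abs_of_neg h', neg_div, div_self h, sign_neg h']; simp
  · rw [abs_of_pos h', div_self h, sign_pos h']; simp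

theorem Set.OrdConnected.injOn_of_hasDerivAt_ne_zero {I : Set ℝ} {f f' : ℝ → ℝ}
    (hI : I.OrdConnected) (hf : ∀ x ∈ I, HasDerivAt f (f' x) x) (hf' : ∀ x ∈ I, f' x ≠ 0) :
    InjOn f I := by
  intro a ha b hb hab
  by_contra hne
  wlog hlt : a < b generalizing a b
  · exact this hb ha hab.symm (Ne.symm hne) (lt_of_le_of_ne (not_lt.1 hlt) (Ne.symm hne))
  have hIcc : Icc a b ⊆ I := hI.out ha hb
  obtain ⟨c, hc, hc0⟩ := exists_hasDerivAt_eq_zero hlt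
    (fun y hy => (hf y (hIcc hy)).continuousAt.continuousWithinAt) hab
    (fun y hy => hf y (hIcc (Ioo_subset_Icc_self hy)))
  exact hf' c (hIcc (Ioo_subset_Icc_self hc)) hc0

section InvFunOn

variable {I : Set ℝ} {f f' : ℝ → ℝ} {x : ℝ}

theorem HasStrictDerivAt.hasDerivAt_invFunOn {d : ℝ} (hf : HasStrictDerivAt f d x) (hd : d ≠ 0)
    (hI : I ∈ 𝓝 x) (hinj : InjOn f I) : HasDerivAt (invFunOn f I) d⁻¹ (f x) :=
  (hf.to_local_left_inverse hd (by
    filter_upwards [hI] with y hy using hinj.leftInvOn_invFunOn hy)).hasDerivAt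

theorem eventually_hasDerivAt_invFunOn (hI : IsOpen I) (hinj : InjOn f I)
    (hf : ∀ y ∈ I, HasDerivAt f (f' y) y) (hf'c : ContinuousOn f' I) (hf'0 : ∀ y ∈ I, f' y ≠ 0)
    (hx : x ∈ I) :
    ∀ᶠ z in 𝓝 (f x), HasDerivAt (invFunOn f I) (f' (invFunOn f I z))⁻¹ z := by
  have hstrict : ∀ y ∈ I, HasStrictDerivAt f (f' y) y := fun y hy =>
    hasStrictDerivAt_of_hasDerivAt_of_continuousAt
      (eventually_of_mem (hI.mem_nhds hy) hf) (hf'c.continuousAt (hI.mem_nhds hy))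
  have himage : f '' I ∈ 𝓝 (f x) :=
    (hstrict x hx).map_nhds_eq (hf'0 x hx) ▸ image_mem_map (hI.mem_nhds hx)
  filter_upwards [himage]
  rintro _ ⟨y, hy, rfl⟩
  rw [hinj.leftInvOn_invFunOn hy]
  exact (hstrict y hy).hasDerivAt_invFunOn (hf'0 y hy) (hI.mem_nhds hy) hinj

theorem hasDerivAt_invFunOn_comp {f'' H H' : ℝ → ℝ} {c : ℝ} (hI : IsOpen I) (hinj : InjOn f I)
    (hf : ∀ y ∈ I, HasDerivAt f (f' y) y) (hf2 : ∀ y ∈ I, HasDerivAt f' (f'' y) y)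
    (hf'0 : ∀ y ∈ I, f' y ≠ 0) (hx : x ∈ I) (hHx : H x = f x)
    (hH : ∀ᶠ y in 𝓝 x, HasDerivAt H (H' y) y) (hH' : HasDerivAt H' c x) :
    (∀ᶠ y in 𝓝 x, HasDerivAt (fun y => invFunOn f I (H y)) (H' y / f' (invFunOn f I (H y))) y) ∧
      HasDerivAt (fun y => H' y / f' (invFunOn f I (H y)))
        ((c - f'' x * (H' x / f' x) ^ 2) / f' x) x := by
  have hf'c : ContinuousOn f' I := fun y hy => (hf2 y hy).continuousAt.continuousWithinAt
  have hinvx : invFunOn f I (H x) = x := hHx ▸ hinj.leftInvOn_invFunOn hx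
  have hHt : Tendsto H (𝓝 x) (𝓝 (f x)) := hHx ▸ hH.self_of_nhds.continuousAt.tendsto
  have hcomp : ∀ᶠ y in 𝓝 x,
      HasDerivAt (fun y => invFunOn f I (H y)) (H' y / f' (invFunOn f I (H y))) y := by
    filter_upwards [hH, hHt.eventually (eventually_hasDerivAt_invFunOn hI hinj hf hf'c hf'0 hx)]
      with y hHy hinv
    exact (hinv.comp y hHy).congr_deriv (inv_mul_eq_div _ _)
  refine ⟨hcomp, ?_⟩
  have hφ := hcomp.self_of_nhds
  rw [hinvx] at hφ
  have hf'φ : HasDerivAt (fun y => f' (invFunOn f I (H y))) (f'' x * (H' x / f' x)) x := by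
    refine HasDerivAt.comp x ?_ hφ
    rw [hinvx]
    exact hf2 x hx
  refine (hH'.div hf'φ (by rw [hinvx]; exact hf'0 x hx)).congr_deriv ?_
  rw [hinvx]
  field_simp [hf'0 x hx]

end InvFunOn

/-- The weighted quasi-arithmetic mean `f⁻¹((1 - w y) f x + w y f y)` of `x` and `y`. -/
noncomputable def weightedQuasiMean (I : Set ℝ) (f w : ℝ → ℝ) (x y : ℝ) : ℝ :=
  invFunOn f I (f x + w y * (f y - f x))

section WeightedQuasiMean

variable {I : Set ℝ} {f f' f'' w w' : ℝ → ℝ} {x : ℝ}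

theorem weightedQuasiMean_self (hinj : InjOn f I) (hx : x ∈ I) :
    weightedQuasiMean I f w x x = x := by
  simpa [weightedQuasiMean] using hinj.leftInvOn_invFunOn hx

theorem hasDerivAt_weightedQuasiMean (hI : IsOpen I) (hinj : InjOn f I)
    (hf : ∀ y ∈ I, HasDerivAt f (f' y) y) (hf2 : ∀ y ∈ I, HasDerivAt f' (f'' y) y)
    (hf'0 : ∀ y ∈ I, f' y ≠ 0) (hw : ∀ᶠ y in 𝓝 x, HasDerivAt w (w' y) y)
    (hw' : ContinuousAt w' x) (hx : x ∈ I) :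
    ∃ φ' : ℝ → ℝ, (∀ᶠ y in 𝓝 x, HasDerivAt (weightedQuasiMean I f w x) (φ' y) y) ∧
      φ' x = w x ∧ HasDerivAt φ' (2 * w' x + w x * (1 - w x) * (f'' x / f' x)) x := by
  have hH : ∀ᶠ y in 𝓝 x, HasDerivAt (fun y => f x + w y * (f y - f x))
      (w' y * (f y - f x) + w y * f' y) y := by
    filter_upwards [hw, hI.mem_nhds hx] with y hwy hy
    exact ((hwy.mul ((hf y hy).sub_const (f x))).const_add (f x)).congr_deriv (by ring)
  have hH' : HasDerivAt (fun y => w' y * (f y - f x) + w y * f' y)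
      (w' x * f' x + (w' x * f' x + w x * f'' x)) x :=
    (((hf x hx).sub_const (f x)).mul_of_eq_zero (sub_self _) hw').add
      (hw.self_of_nhds.mul (hf2 x hx))
  obtain ⟨hφ, hφ'⟩ := hasDerivAt_invFunOn_comp hI hinj hf hf2 hf'0 hx (by ring) hH hH'
  have hinvx : invFunOn f I (f x) = x := hinj.leftInvOn_invFunOn hx
  refine ⟨_, hφ, ?_, hφ'.congr_deriv ?_⟩
  · simp only [sub_self, mul_zero, zero_add, add_zero, hinvx]
    field_simp [hf'0 x hx]
  · simp only [sub_self, mul_zero, zero_add]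
    field_simp [hf'0 x hx]
    ring

theorem weightedQuasiMean_le_of_isLocalMin {g g' g'' v v' : ℝ → ℝ} (hI : IsOpen I) (hx : x ∈ I)
    (hinjf : InjOn f I) (hf : ∀ y ∈ I, HasDerivAt f (f' y) y)
    (hf2 : ∀ y ∈ I, HasDerivAt f' (f'' y) y) (hf'0 : ∀ y ∈ I, f' y ≠ 0)
    (hinjg : InjOn g I) (hg : ∀ y ∈ I, HasDerivAt g (g' y) y)
    (hg2 : ∀ y ∈ I, HasDerivAt g' (g'' y) y) (hg'0 : ∀ y ∈ I, g' y ≠ 0)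
    (hw : ∀ᶠ y in 𝓝 x, HasDerivAt w (w' y) y) (hw' : ContinuousAt w' x)
    (hv : ∀ᶠ y in 𝓝 x, HasDerivAt v (v' y) y) (hv' : ContinuousAt v' x)
    (hmin : IsLocalMin (fun y => weightedQuasiMean I g v x y - weightedQuasiMean I f w x y) x) :
    v x = w x ∧ 2 * w' x + w x * (1 - w x) * (f'' x / f' x)
      ≤ 2 * v' x + w x * (1 - w x) * (g'' x / g' x) := by
  obtain ⟨φ', hφ, hφx, hφ'⟩ := hasDerivAt_weightedQuasiMean hI hinjf hf hf2 hf'0 hw hw' hx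
  obtain ⟨ψ', hψ, hψx, hψ'⟩ := hasDerivAt_weightedQuasiMean hI hinjg hg hg2 hg'0 hv hv' hx
  have hD : ∀ᶠ y in 𝓝 x, HasDerivAt (fun y => weightedQuasiMean I g v x y -
      weightedQuasiMean I f w x y) (ψ' y - φ' y) y := by
    filter_upwards [hφ, hψ] with y h₁ h₂ using h₂.sub h₁
  have hvw : v x = w x := by
    have := hmin.hasDerivAt_eq_zero hD.self_of_nhds
    linarith
  have := hmin.nonneg_of_hasDerivAt_deriv hD (hψ'.sub hφ')
  exact ⟨hvw, by rw [hvw] at this; linarith⟩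

end WeightedQuasiMean

/-- The weight of coordinate `i` at `y` in `A_{f,p}` when all other coordinates equal `x`. -/
noncomputable def coordWeight {n : ℕ} (p : Fin n → ℝ → ℝ) (i : Fin n) (x y : ℝ) : ℝ :=
  p i y / (p i y + ∑ j ∈ Finset.univ.erase i, p j x)

theorem bajMean_update_eq {n : ℕ} (I : Set ℝ) (f : ℝ → ℝ) (p : Fin n → ℝ → ℝ) (i : Fin n)
    {x y : ℝ} (h : p i y + ∑ j ∈ Finset.univ.erase i, p j x ≠ 0) :
    bajMean I f p (update (fun _ => x) i y) = weightedQuasiMean I f (coordWeight p i x) x y := by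
  have hsum : ∀ r : ℝ → ℝ, ∑ j, p j (update (fun _ => x) i y j) * r (update (fun _ => x) i y j)
      = p i y * r y + (∑ j ∈ Finset.univ.erase i, p j x) * r x := by
    intro r
    rw [← Finset.add_sum_erase _ _ (Finset.mem_univ i), update_self, Finset.sum_mul]
    congr 1
    exact Finset.sum_congr rfl fun j hj => by rw [update_of_ne (Finset.ne_of_mem_erase hj)]
  have hsum1 := hsum 1
  simp only [Pi.one_apply, mul_one] at hsum1
  rw [bajMean, weightedQuasiMean, coordWeight, hsum f, hsum1]
  congr 1
  field_simp
  ring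

theorem hasDerivAt_coordWeight {n : ℕ} {p p' : Fin n → ℝ → ℝ} {i : Fin n} {x y : ℝ}
    (hp : HasDerivAt (p i) (p' i y) y) (h : p i y + ∑ j ∈ Finset.univ.erase i, p j x ≠ 0) :
    HasDerivAt (coordWeight p i x)
      ((∑ j ∈ Finset.univ.erase i, p j x) * p' i y /
        (p i y + ∑ j ∈ Finset.univ.erase i, p j x) ^ 2) y := by
  refine (hp.div (hp.add_const _) h).congr_deriv ?_
  ring

theorem add_sum_erase_pos {n : ℕ} {I : Set ℝ} {r : Fin n → ℝ → ℝ} (hr : ∀ i, ∀ y ∈ I, 0 < r i y)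
    {x y : ℝ} (hx : x ∈ I) (hy : y ∈ I) (i : Fin n) :
    0 < r i y + ∑ j ∈ Finset.univ.erase i, r j x :=
  add_pos_of_pos_of_nonneg (hr i y hy) (Finset.sum_nonneg fun j _ => (hr j x hx).le)

theorem eventually_hasDerivAt_coordWeight {n : ℕ} {I : Set ℝ} {p p' : Fin n → ℝ → ℝ} {x : ℝ}
    (hI : IsOpen I) (hp : ∀ i, ∀ y ∈ I, 0 < p i y)
    (hpd : ∀ i, ∀ y ∈ I, HasDerivAt (p i) (p' i y) y) (hpd' : ∀ i, ContinuousOn (p' i) I)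
    (hx : x ∈ I) (i : Fin n) :
    (∀ᶠ y in 𝓝 x, HasDerivAt (coordWeight p i x)
      ((∑ j ∈ Finset.univ.erase i, p j x) * p' i y /
        (p i y + ∑ j ∈ Finset.univ.erase i, p j x) ^ 2) y) ∧
    ContinuousAt (fun y => (∑ j ∈ Finset.univ.erase i, p j x) * p' i y /
        (p i y + ∑ j ∈ Finset.univ.erase i, p j x) ^ 2) x := by
  refine ⟨?_, ?_⟩
  · filter_upwards [hI.mem_nhds hx] with y hy using
      hasDerivAt_coordWeight (hpd i y hy) (add_sum_erase_pos hp hx hy i).ne'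
  · exact (continuousAt_const.mul ((hpd' i).continuousAt (hI.mem_nhds hx))).div
      (((hpd i x hx).continuousAt.add continuousAt_const).pow 2)
      (pow_ne_zero 2 (add_sum_erase_pos hp hx hx i).ne')

theorem LocallySmaller.isLocalMin_weightedQuasiMean_sub {n : ℕ} {I : Set ℝ} {f g : ℝ → ℝ}
    {p q : Fin n → ℝ → ℝ} (hloc : LocallySmaller I (bajMean I f p) (bajMean I g q))
    (hI : IsOpen I) (hinjf : InjOn f I) (hinjg : InjOn g I) (hp : ∀ i, ∀ y ∈ I, 0 < p i y)
    (hq : ∀ i, ∀ y ∈ I, 0 < q i y) {x : ℝ} (hx : x ∈ I) (i : Fin n) :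
    IsLocalMin (fun y => weightedQuasiMean I g (coordWeight q i x) x y -
      weightedQuasiMean I f (coordWeight p i x) x y) x := by
  obtain ⟨U, hU, -, hdiag, hle⟩ := hloc
  have hcont : Continuous fun y : ℝ => update (fun _ : Fin n => x) i y :=
    continuous_const.update i continuous_id
  have hupdate : ∀ᶠ y in 𝓝 x, update (fun _ : Fin n => x) i y ∈ U := by
    refine hcont.continuousAt.preimage_mem_nhds ?_
    simpa only [update_eq_self] using hU.mem_nhds (hdiag x hx)
  filter_upwards [hupdate, hI.mem_nhds hx] with y hyU hy
  have := hle _ hyU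
  rw [bajMean_update_eq I f p i (add_sum_erase_pos hp hx hy i).ne',
    bajMean_update_eq I g q i (add_sum_erase_pos hq hx hy i).ne'] at this
  simp only [weightedQuasiMean_self hinjf hx, weightedQuasiMean_self hinjg hx, sub_self]
  linarith

theorem LocallySmaller.coord_second_order_le {n : ℕ} (hn : 2 ≤ n) {I : Set ℝ}
    {f f' f'' g g' g'' : ℝ → ℝ} {p p' q q' : Fin n → ℝ → ℝ}
    (hloc : LocallySmaller I (bajMean I f p) (bajMean I g q))
    (hI : IsOpen I) (hinjf : InjOn f I) (hf : ∀ y ∈ I, HasDerivAt f (f' y) y)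
    (hf2 : ∀ y ∈ I, HasDerivAt f' (f'' y) y) (hf'0 : ∀ y ∈ I, f' y ≠ 0)
    (hinjg : InjOn g I) (hg : ∀ y ∈ I, HasDerivAt g (g' y) y)
    (hg2 : ∀ y ∈ I, HasDerivAt g' (g'' y) y) (hg'0 : ∀ y ∈ I, g' y ≠ 0)
    (hp : ∀ i, ∀ y ∈ I, 0 < p i y) (hq : ∀ i, ∀ y ∈ I, 0 < q i y)
    (hpd : ∀ i, ∀ y ∈ I, HasDerivAt (p i) (p' i y) y) (hpd' : ∀ i, ContinuousOn (p' i) I)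
    (hqd : ∀ i, ∀ y ∈ I, HasDerivAt (q i) (q' i y) y) (hqd' : ∀ i, ContinuousOn (q' i) I)
    {x : ℝ} (hx : x ∈ I) (i : Fin n) :
    2 * (p' i x / ∑ j, p j x) + p i x / (∑ j, p j x) * (f'' x / f' x)
      ≤ 2 * (q' i x / ∑ j, q j x) + p i x / (∑ j, p j x) * (g'' x / g' x) := by
  have : Nontrivial (Fin n) := Fin.nontrivial_iff_two_le.2 hn
  have hCp : 0 < ∑ j ∈ Finset.univ.erase i, p j x :=
    Finset.sum_pos (fun j _ => hp j x hx) (Finset.univ_nontrivial.erase_nonempty)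
  have hCq : 0 < ∑ j ∈ Finset.univ.erase i, q j x :=
    Finset.sum_pos (fun j _ => hq j x hx) (Finset.univ_nontrivial.erase_nonempty)
  have hP := Finset.add_sum_erase Finset.univ (fun j => p j x) (Finset.mem_univ i)
  have hQ := Finset.add_sum_erase Finset.univ (fun j => q j x) (Finset.mem_univ i)
  obtain ⟨hw, hw'⟩ := eventually_hasDerivAt_coordWeight hI hp hpd hpd' hx i
  obtain ⟨hv, hv'⟩ := eventually_hasDerivAt_coordWeight hI hq hqd hqd' hx i
  obtain ⟨hvw, hle⟩ := weightedQuasiMean_le_of_isLocalMin hI hx hinjf hf hf2 hf'0 hinjg hg hg2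
    hg'0 hw hw' hv hv' (hloc.isLocalMin_weightedQuasiMean_sub hI hinjf hinjg hp hq hx i)
  simp only [coordWeight, hP, hQ] at hvw hle
  set Cp := ∑ j ∈ Finset.univ.erase i, p j x
  set Cq := ∑ j ∈ Finset.univ.erase i, q j x
  set P := ∑ j, p j x
  set Q := ∑ j, q j x
  set r := p i x / P
  have hP0 : 0 < P := hP ▸ add_pos (hp i x hx) hCp
  have hQ0 : 0 < Q := hQ ▸ add_pos (hq i x hx) hCq
  have h1p : 1 - r = Cp / P := by
    rw [eq_div_iff hP0.ne', sub_mul, one_mul, div_mul_cancel₀ _ hP0.ne', ← hP]; ring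
  have h1q : 1 - r = Cq / Q := by
    rw [← hvw, eq_div_iff hQ0.ne', sub_mul, one_mul, div_mul_cancel₀ _ hQ0.ne', ← hQ]; ring
  refine le_of_mul_le_mul_left ?_ (h1p ▸ div_pos hCp hP0 : 0 < 1 - r)
  calc (1 - r) * (2 * (p' i x / P) + r * (f'' x / f' x))
      = 2 * (Cp * p' i x / P ^ 2) + r * (1 - r) * (f'' x / f' x) := by rw [h1p]; ring
    _ ≤ 2 * (Cq * q' i x / Q ^ 2) + r * (1 - r) * (g'' x / g' x) := hle
    _ = (1 - r) * (2 * (q' i x / Q) + r * (g'' x / g' x)) := by rw [h1q]; ring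

theorem two_mul_sum_div_add_le_of_forall {ι : Type*} [Fintype ι] {a a' b b' : ι → ℝ} {F G : ℝ}
    (ha : ∑ j, a j ≠ 0)
    (h : ∀ i, 2 * (a' i / ∑ j, a j) + a i / (∑ j, a j) * F
      ≤ 2 * (b' i / ∑ j, b j) + a i / (∑ j, a j) * G) :
    2 * ((∑ j, a' j) / ∑ j, a j) + F ≤ 2 * ((∑ j, b' j) / ∑ j, b j) + G := by
  simpa only [Finset.sum_add_distrib, ← Finset.mul_sum, ← Finset.sum_mul, ← Finset.sum_div,
    div_self ha, one_mul] using Finset.sum_le_sum fun i (_ : i ∈ Finset.univ) => h i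

theorem hasDerivAt_sq_mul_abs_div {P Q u v : ℝ → ℝ} {P' Q' u' v' x : ℝ}
    (hP : HasDerivAt P P' x) (hQ : HasDerivAt Q Q' x) (hu : HasDerivAt u u' x)
    (hv : HasDerivAt v v' x) (hP0 : P x ≠ 0) (hQ0 : Q x ≠ 0) (hu0 : u x ≠ 0) (hv0 : v x ≠ 0) :
    HasDerivAt (fun y => Q y ^ 2 * |v y| / (P y ^ 2 * |u y|))
      (Q x ^ 2 * |v x| / (P x ^ 2 * |u x|) *
        ((2 * (Q' / Q x) + v' / v x) - (2 * (P' / P x) + u' / u x))) x := by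
  have hden : P x ^ 2 * |u x| ≠ 0 := by positivity
  refine (((hQ.pow 2).mul (hv.abs_of_ne_zero hv0)).div
    ((hP.pow 2).mul (hu.abs_of_ne_zero hu0)) hden).congr_deriv ?_
  simp only [Pi.mul_apply, Pi.pow_apply]
  field_simp
  ring

theorem stmt6_general {n : ℕ} (hn : 2 ≤ n) (I : Set ℝ) (hIopen : IsOpen I)
    (hIconn : I.OrdConnected)
    (f f' f'' g g' g'' : ℝ → ℝ) (p p' q q' : Fin n → ℝ → ℝ)
    (hf : ∀ x ∈ I, HasDerivAt f (f' x) x) (hf2 : ∀ x ∈ I, HasDerivAt f' (f'' x) x)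
    (hf'0 : ∀ x ∈ I, f' x ≠ 0)
    (hg : ∀ x ∈ I, HasDerivAt g (g' x) x) (hg2 : ∀ x ∈ I, HasDerivAt g' (g'' x) x)
    (hg'0 : ∀ x ∈ I, g' x ≠ 0)
    (hp : ∀ i, ∀ x ∈ I, 0 < p i x) (hq : ∀ i, ∀ x ∈ I, 0 < q i x)
    (hpd : ∀ i, ∀ x ∈ I, HasDerivAt (p i) (p' i x) x)
    (hpd' : ∀ i, ContinuousOn (p' i) I)
    (hqd : ∀ i, ∀ x ∈ I, HasDerivAt (q i) (q' i x) x)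
    (hqd' : ∀ i, ContinuousOn (q' i) I)
    (hloc : LocallySmaller I (bajMean I f p) (bajMean I g q)) :
    MonotoneOn (fun x => (∑ j, q j x) ^ 2 * |g' x| / ((∑ j, p j x) ^ 2 * |f' x|)) I := by
  have : NeZero n := ⟨by omega⟩
  have hinjf := hIconn.injOn_of_hasDerivAt_ne_zero hf hf'0
  have hinjg := hIconn.injOn_of_hasDerivAt_ne_zero hg hg'0
  have hP0 : ∀ x ∈ I, 0 < ∑ j, p j x := fun x hx =>
    Finset.sum_pos (fun j _ => hp j x hx) Finset.univ_nonempty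
  have hQ0 : ∀ x ∈ I, 0 < ∑ j, q j x := fun x hx =>
    Finset.sum_pos (fun j _ => hq j x hx) Finset.univ_nonempty
  have hderiv : ∀ x ∈ I, HasDerivAt
      (fun x => (∑ j, q j x) ^ 2 * |g' x| / ((∑ j, p j x) ^ 2 * |f' x|))
      ((∑ j, q j x) ^ 2 * |g' x| / ((∑ j, p j x) ^ 2 * |f' x|) *
        ((2 * ((∑ j, q' j x) / ∑ j, q j x) + g'' x / g' x) -
          (2 * ((∑ j, p' j x) / ∑ j, p j x) + f'' x / f' x))) x := fun x hx =>
    hasDerivAt_sq_mul_abs_div (HasDerivAt.fun_sum fun j _ => hpd j x hx)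
      (HasDerivAt.fun_sum fun j _ => hqd j x hx) (hf2 x hx) (hg2 x hx) (hP0 x hx).ne'
      (hQ0 x hx).ne' (hf'0 x hx) (hg'0 x hx)
  refine monotoneOn_of_hasDerivWithinAt_nonneg hIconn.convex
    (fun x hx => (hderiv x hx).continuousAt.continuousWithinAt)
    (fun x hx => (hderiv x (interior_subset hx)).hasDerivWithinAt) fun x hx => ?_
  rw [hIopen.interior_eq] at hx
  refine mul_nonneg (by positivity)
    (sub_nonneg.2 (two_mul_sum_div_add_le_of_forall (hP0 x hx).ne' fun i => ?_))
  exact hloc.coord_second_order_le hn hIopen hinjf hf hf2 hf'0 hinjg hg hg2 hg'0 hp hq hpd hpd'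
    hqd hqd' hx i

/-- Theorem 1NC, second-order necessary condition: if `f, g` are twice differentiable
with nonvanishing first derivatives, `p, q : I → ℝ₊ⁿ` are continuously differentiable
and `A_{f,p}` is locally smaller than `A_{g,q}`, then `q₀²|g'|/(p₀²|f'|)` is
increasing on `I`. -/
theorem stmt6 {n : ℕ} (hn : 2 ≤ n) (I : Set ℝ) (hIopen : IsOpen I)
    (hIconn : I.OrdConnected) (hIne : I.Nonempty)
    (f f' f'' g g' g'' : ℝ → ℝ) (p p' q q' : Fin n → ℝ → ℝ)
    (hf : ∀ x ∈ I, HasDerivAt f (f' x) x) (hf2 : ∀ x ∈ I, HasDerivAt f' (f'' x) x)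
    (hf'0 : ∀ x ∈ I, f' x ≠ 0)
    (hg : ∀ x ∈ I, HasDerivAt g (g' x) x) (hg2 : ∀ x ∈ I, HasDerivAt g' (g'' x) x)
    (hg'0 : ∀ x ∈ I, g' x ≠ 0)
    (hp : ∀ i, ∀ x ∈ I, 0 < p i x) (hq : ∀ i, ∀ x ∈ I, 0 < q i x)
    (hpd : ∀ i, ∀ x ∈ I, HasDerivAt (p i) (p' i x) x)
    (hpd' : ∀ i, ContinuousOn (p' i) I)
    (hqd : ∀ i, ∀ x ∈ I, HasDerivAt (q i) (q' i x) x)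
    (hqd' : ∀ i, ContinuousOn (q' i) I)
    (hloc : LocallySmaller I (bajMean I f p) (bajMean I g q)) :
    MonotoneOn (fun x => (∑ j, q j x) ^ 2 * |g' x| / ((∑ j, p j x) ^ 2 * |f' x|)) I :=
  stmt6_general hn I hIopen hIconn f f' f'' g g' g'' p p' q q' hf hf2 hf'0 hg hg2 hg'0 hp hq hpd
    hpd' hqd hqd' hloc
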